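/- arXiv:2409.14639 — 6 statements merged into one kernel-verified Lean document; each statement's English description precedes it below -/
import Mathlib

section
/- Let n ≥ 1 and let M_p, M_m, M_d, D_d, K_d be real n×n matrices with M_d and M_m invertible and with the matrix 1 - M_p M_d⁻¹ invertible. Set M_t = M_p + M_m, h_t = h_p + h_m, and Γ = 1 - M_m M_d⁻¹ (1 - M_p M_d⁻¹)⁻¹. Suppose vectors a, a_d, e, ė, h_p, h_m, f_s, f_ext, u ∈ ℝⁿ satisfy the payload dynamics M_p a + h_p = -f_s + f_ext, the manipulator dynamics M_m a + h_m = u + f_s, and the impedance control law u = (M_t - Γ M_p)(a_d - M_d⁻¹(D_d ė + K_d e)) + h_t - Γ(f_s + h_p). Then the desired impedance relation M_d (a - a_d) + D_d ė + K_d e = f_ext holds. -/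
open Matrix

/-!
Adding the payload and manipulator dynamics eliminates the sensor force, and substituting the
control law with commanded acceleration `w = a_d - M_d⁻¹ (D_d ė + K_d e)` leaves
`(M_t - Γ M_p) (a - w) = (1 - Γ) f_ext`. The gain `Γ` is chosen so that
`M_t - Γ M_p = (1 - Γ) M_d`, and `1 - Γ = M_m M_d⁻¹ (1 - M_p M_d⁻¹)⁻¹` is invertible, so it
cancels and leaves `M_d (a - w) = f_ext`.
-/

section

variable {n R : Type*} [Fintype n] [DecidableEq n] [CommRing R]

theorem Matrix.inv_one_sub_mul_inv_mul_eq_add {P D : Matrix n n R} (hD : IsUnit D)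
    (hPD : IsUnit (1 - P * D⁻¹)) :
    (1 - P * D⁻¹)⁻¹ * D = D + (1 - P * D⁻¹)⁻¹ * P := by
  have hfactor : D - P = (1 - P * D⁻¹) * D := by
    rw [Matrix.sub_mul, Matrix.one_mul,
      Matrix.nonsing_inv_mul_cancel_right D P ((isUnit_iff_isUnit_det D).mp hD)]
  have hcancel : (1 - P * D⁻¹)⁻¹ * (D - P) = D := by
    rw [hfactor, ← Matrix.mul_assoc, nonsing_inv_mul _ ((isUnit_iff_isUnit_det _).mp hPD),
      Matrix.one_mul]
  rwa [Matrix.mul_sub, sub_eq_iff_eq_add] at hcancel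

theorem Matrix.add_sub_mul_eq_one_sub_mul {P M D Γ : Matrix n n R} (hD : IsUnit D)
    (hPD : IsUnit (1 - P * D⁻¹)) (hΓ : Γ = 1 - M * D⁻¹ * (1 - P * D⁻¹)⁻¹) :
    P + M - Γ * P = (1 - Γ) * D := by
  rw [hΓ, sub_sub_cancel, Matrix.mul_assoc (M * D⁻¹), inv_one_sub_mul_inv_mul_eq_add hD hPD,
    Matrix.mul_add, Matrix.nonsing_inv_mul_cancel_right _ _ ((isUnit_iff_isUnit_det D).mp hD)]
  noncomm_ring

theorem closed_loop_mulVec_eq {M_p M_m Γ : Matrix n n R} {a w h_p h_m f_s f_ext u : n → R}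
    (hpayload : M_p *ᵥ a + h_p = -f_s + f_ext) (hmanip : M_m *ᵥ a + h_m = u + f_s)
    (hctrl : u = (M_p + M_m - Γ * M_p) *ᵥ w + (h_p + h_m) - Γ *ᵥ (f_s + h_p)) :
    (M_p + M_m - Γ * M_p) *ᵥ (a - w) = (1 - Γ) *ᵥ f_ext := by
  have hforce : f_s + h_p = f_ext - M_p *ᵥ a := by linear_combination (norm := module) hpayload
  rw [hforce] at hctrl
  simp only [mulVec_sub, sub_mulVec, add_mulVec, one_mulVec, ← mulVec_mulVec] at hctrl ⊢
  linear_combination (norm := module) hpayload + hmanip + hctrl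

theorem Matrix.mulVec_sub_sub_inv_mulVec {D : Matrix n n R} (hD : IsUnit D) (x y r : n → R) :
    D *ᵥ (x - (y - D⁻¹ *ᵥ r)) = D *ᵥ (x - y) + r := by
  rw [sub_sub_eq_add_sub, add_sub_right_comm, mulVec_add, mulVec_mulVec,
    mul_nonsing_inv _ ((isUnit_iff_isUnit_det D).mp hD), one_mulVec]

end

theorem impedance_control_establishes_desired_impedance_general
    {n : ℕ}
    (M_p M_m M_d D_d K_d : Matrix (Fin n) (Fin n) ℝ)
    (hMd : IsUnit M_d) (hMm : IsUnit M_m)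
    (hinv : IsUnit (1 - M_p * M_d⁻¹))
    (a a_d e edot h_p h_m f_s f_ext u : Fin n → ℝ)
    (M_t : Matrix (Fin n) (Fin n) ℝ) (hMt : M_t = M_p + M_m)
    (h_t : Fin n → ℝ) (hht : h_t = h_p + h_m)
    (Γ : Matrix (Fin n) (Fin n) ℝ)
    (hΓ : Γ = 1 - M_m * M_d⁻¹ * (1 - M_p * M_d⁻¹)⁻¹)
    (hpayload : M_p *ᵥ a + h_p = -f_s + f_ext)
    (hmanip : M_m *ᵥ a + h_m = u + f_s)
    (hctrl : u = (M_t - Γ * M_p) *ᵥ (a_d - M_d⁻¹ *ᵥ (D_d *ᵥ edot + K_d *ᵥ e)) + h_t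
        - Γ *ᵥ (f_s + h_p)) :
    M_d *ᵥ (a - a_d) + D_d *ᵥ edot + K_d *ᵥ e = f_ext := by
  subst hMt hht
  have hgain : IsUnit (1 - Γ) := by
    rw [hΓ, sub_sub_cancel]
    exact (hMm.mul (isUnit_nonsing_inv_iff.mpr hMd)).mul (isUnit_nonsing_inv_iff.mpr hinv)
  have hloop := closed_loop_mulVec_eq hpayload hmanip hctrl
  rw [add_sub_mul_eq_one_sub_mul hMd hinv hΓ, ← mulVec_mulVec] at hloop
  rw [add_assoc, ← mulVec_sub_sub_inv_mulVec hMd]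
  exact mulVec_injective_of_isUnit hgain hloop

/-- The impedance control law for a manipulator carrying a heavy payload establishes
the desired impedance relation. -/
theorem impedance_control_establishes_desired_impedance
    {n : ℕ} (hn : 1 ≤ n)
    (M_p M_m M_d D_d K_d : Matrix (Fin n) (Fin n) ℝ)
    (hMd : IsUnit M_d) (hMm : IsUnit M_m)
    (hinv : IsUnit (1 - M_p * M_d⁻¹))
    (a a_d e edot h_p h_m f_s f_ext u : Fin n → ℝ)
    (M_t : Matrix (Fin n) (Fin n) ℝ) (hMt : M_t = M_p + M_m)
    (h_t : Fin n → ℝ) (hht : h_t = h_p + h_m)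
    (Γ : Matrix (Fin n) (Fin n) ℝ)
    (hΓ : Γ = 1 - M_m * M_d⁻¹ * (1 - M_p * M_d⁻¹)⁻¹)
    (hpayload : M_p *ᵥ a + h_p = -f_s + f_ext)
    (hmanip : M_m *ᵥ a + h_m = u + f_s)
    (hctrl : u = (M_t - Γ * M_p) *ᵥ (a_d - M_d⁻¹ *ᵥ (D_d *ᵥ edot + K_d *ᵥ e)) + h_t
        - Γ *ᵥ (f_s + h_p)) :
    M_d *ᵥ (a - a_d) + D_d *ᵥ edot + K_d *ᵥ e = f_ext :=
  impedance_control_establishes_desired_impedance_general M_p M_m M_d D_d K_d hMd hMm hinv a a_d e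
    edot h_p h_m f_s f_ext u M_t hMt h_t hht Γ hΓ hpayload hmanip hctrl
end

section
/- Let M_p, M_d, D_d, K_d be real n×n matrices with M_p and M_d invertible and with both 1 - M_p M_d⁻¹ and 1 - M_d M_p⁻¹ invertible. Suppose vectors a, a_d, e, ė, h_p, f_s, f_ext ∈ ℝⁿ satisfy the payload dynamics M_p a + h_p = -f_s + f_ext and the impedance model M_d (a - a_d) + D_d ė + K_d e = f_ext. Then f_ext = (1 - M_p M_d⁻¹)⁻¹ (f_s + h_p + M_p a_d) + (1 - M_d M_p⁻¹)⁻¹ (D_d ė + K_d e). -/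
open Matrix

/-!
Eliminating the acceleration between the two models gives `(1 - M_p M_d⁻¹) f_ext =
f_s + h_p + M_p a_d - M_p M_d⁻¹ (D_d ė + K_d e)`. The factorisation
`1 - M_p M_d⁻¹ = -(M_p M_d⁻¹)(1 - M_d M_p⁻¹)` turns the coefficient of the error term, after
inverting `1 - M_p M_d⁻¹`, into `(1 - M_d M_p⁻¹)⁻¹`; the same factorisation with the roles of
`M_p` and `M_d` swapped shows that `1 - M_d M_p⁻¹` is invertible as soon as `1 - M_p M_d⁻¹` is.
-/

namespace Matrix

variable {m α : Type*} [Fintype m] [DecidableEq m] [CommRing α] {P D : Matrix m m α}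

theorem one_sub_mul_nonsing_inv_eq_neg_mul (hP : IsUnit P) (hD : IsUnit D) :
    1 - P * D⁻¹ = -(P * D⁻¹) * (1 - D * P⁻¹) := by
  rw [isUnit_iff_isUnit_det] at hP hD
  rw [neg_mul, mul_sub, mul_one, ← Matrix.mul_assoc, nonsing_inv_mul_cancel_right _ _ hD,
    mul_nonsing_inv _ hP]
  abel

theorem isUnit_one_sub_mul_nonsing_inv_swap (hP : IsUnit P) (hD : IsUnit D)
    (h : IsUnit (1 - P * D⁻¹)) : IsUnit (1 - D * P⁻¹) := by
  rw [one_sub_mul_nonsing_inv_eq_neg_mul hD hP]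
  exact (hD.mul (isUnit_nonsing_inv_iff.mpr hP)).neg.mul h

theorem one_sub_mul_nonsing_inv_mul_inv_swap (hP : IsUnit P) (hD : IsUnit D)
    (h : IsUnit (1 - D * P⁻¹)) : (1 - P * D⁻¹) * (1 - D * P⁻¹)⁻¹ = -(P * D⁻¹) := by
  rw [one_sub_mul_nonsing_inv_eq_neg_mul hP hD, Matrix.mul_assoc,
    mul_nonsing_inv _ ((isUnit_iff_isUnit_det _).mp h), Matrix.mul_one]

theorem one_sub_mul_nonsing_inv_mulVec_of_dynamics (hD : IsUnit D) {a a_d h s f v : m → α}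
    (hpayload : P *ᵥ a + h = -s + f) (himp : D *ᵥ (a - a_d) + v = f) :
    (1 - P * D⁻¹) *ᵥ f = s + h + P *ᵥ a_d - (P * D⁻¹) *ᵥ v := by
  have hDa : (P * D⁻¹) *ᵥ (f - v) = P *ᵥ (a - a_d) := by
    rw [← himp, add_sub_cancel_right, mulVec_mulVec,
      nonsing_inv_mul_cancel_right _ _ ((isUnit_iff_isUnit_det _).mp hD)]
  have hf : f = P *ᵥ a + h + s := by rw [hpayload]; abel
  rw [sub_mulVec, one_mulVec, ← sub_add_cancel f v, mulVec_add, hDa, mulVec_sub]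
  nth_rewrite 1 [hf]
  abel

end Matrix

theorem external_force_expression_general
    {n : ℕ}
    (M_p M_d D_d K_d : Matrix (Fin n) (Fin n) ℝ)
    (hMp : IsUnit M_p) (hMd : IsUnit M_d)
    (hinv1 : IsUnit (1 - M_p * M_d⁻¹))
    (a a_d e edot h_p f_s f_ext : Fin n → ℝ)
    (hpayload : M_p *ᵥ a + h_p = -f_s + f_ext)
    (himp : M_d *ᵥ (a - a_d) + D_d *ᵥ edot + K_d *ᵥ e = f_ext) :
    f_ext = (1 - M_p * M_d⁻¹)⁻¹ *ᵥ (f_s + h_p + M_p *ᵥ a_d)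
      + (1 - M_d * M_p⁻¹)⁻¹ *ᵥ (D_d *ᵥ edot + K_d *ᵥ e) := by
  rw [add_assoc] at himp
  have hA := (isUnit_iff_isUnit_det _).mp hinv1
  have hB := isUnit_one_sub_mul_nonsing_inv_swap hMp hMd hinv1
  calc f_ext = (1 - M_p * M_d⁻¹)⁻¹ *ᵥ ((1 - M_p * M_d⁻¹) *ᵥ f_ext) := by
        rw [mulVec_mulVec, nonsing_inv_mul _ hA, one_mulVec]
    _ = (1 - M_p * M_d⁻¹)⁻¹ *ᵥ
          (f_s + h_p + M_p *ᵥ a_d - (M_p * M_d⁻¹) *ᵥ (D_d *ᵥ edot + K_d *ᵥ e)) := by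
        rw [one_sub_mul_nonsing_inv_mulVec_of_dynamics hMd hpayload himp]
    _ = _ := by
        rw [sub_eq_add_neg (f_s + h_p + _), ← neg_mulVec,
          ← one_sub_mul_nonsing_inv_mul_inv_swap hMp hMd hB, mulVec_add, mulVec_mulVec _ _ (_ * _),
          ← Matrix.mul_assoc, nonsing_inv_mul _ hA, Matrix.one_mul]

/-- Expression of the external contact force in terms of the sensor reading, payload
nonlinear term, desired acceleration, and tracking errors (eq. (7a) of the paper). -/
theorem external_force_expression
    {n : ℕ} (hn : 1 ≤ n)
    (M_p M_d D_d K_d : Matrix (Fin n) (Fin n) ℝ)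
    (hMp : IsUnit M_p) (hMd : IsUnit M_d)
    (hinv1 : IsUnit (1 - M_p * M_d⁻¹)) (hinv2 : IsUnit (1 - M_d * M_p⁻¹))
    (a a_d e edot h_p f_s f_ext : Fin n → ℝ)
    (hpayload : M_p *ᵥ a + h_p = -f_s + f_ext)
    (himp : M_d *ᵥ (a - a_d) + D_d *ᵥ edot + K_d *ᵥ e = f_ext) :
    f_ext = (1 - M_p * M_d⁻¹)⁻¹ *ᵥ (f_s + h_p + M_p *ᵥ a_d)
      + (1 - M_d * M_p⁻¹)⁻¹ *ᵥ (D_d *ᵥ edot + K_d *ᵥ e) :=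
  external_force_expression_general M_p M_d D_d K_d hMp hMd hinv1 a a_d e edot h_p f_s f_ext
    hpayload himp
end

section
/- Let M_p, M_d be real n×n matrices with M_Δ = M_d - M_p invertible. Suppose vectors a, a*, h_p, h_Δ, f_s, f_ext ∈ ℝⁿ satisfy the payload dynamics M_p a + h_p = -f_s + f_ext and the outer-loop equation M_Δ a* + h_Δ = f_s, and set the acceleration error ã = a* - a. Then f_ext = f*_ext - M_p ã, where f*_ext = (1 + M_p M_Δ⁻¹) f_s + h_p - M_p M_Δ⁻¹ h_Δ. -/
/-! Solving the outer-loop equation for the estimated acceleration gives `M_Δ a* = f_s - h_Δ`,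
so the gain `M_p M_Δ⁻¹` turns `f_s - h_Δ` into `M_p a*`. Substituting this into `f*_ext` and
`f_ext = M_p a + h_p + f_s` from the payload dynamics, both sides agree. -/

open Matrix

theorem Matrix.mul_nonsing_inv_mulVec_mulVec {m n R : Type*} [Fintype n] [DecidableEq n]
    [CommRing R] (B : Matrix m n R) {A : Matrix n n R} (hA : IsUnit A) (x : n → R) :
    (B * A⁻¹) *ᵥ (A *ᵥ x) = B *ᵥ x := by
  rw [mulVec_mulVec, nonsing_inv_mul_cancel_right _ _ ((isUnit_iff_isUnit_det A).mp hA)]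

theorem external_force_estimate_decomposition_general
    {n : ℕ}
    (M_p : Matrix (Fin n) (Fin n) ℝ)
    (M_Δ : Matrix (Fin n) (Fin n) ℝ)
    (hMΔunit : IsUnit M_Δ)
    (a astar h_p h_Δ f_s f_ext : Fin n → ℝ)
    (hpayload : M_p *ᵥ a + h_p = -f_s + f_ext)
    (houter : M_Δ *ᵥ astar + h_Δ = f_s)
    (atilde : Fin n → ℝ) (hatilde : atilde = astar - a)
    (fstar : Fin n → ℝ)
    (hfstar : fstar = (1 + M_p * M_Δ⁻¹) *ᵥ f_s + h_p - (M_p * M_Δ⁻¹) *ᵥ h_Δ) :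
    f_ext = fstar - M_p *ᵥ atilde := by
  have hgain : (M_p * M_Δ⁻¹) *ᵥ (f_s - h_Δ) = M_p *ᵥ astar := by
    rw [← eq_sub_of_add_eq houter, mul_nonsing_inv_mulVec_mulVec _ hMΔunit]
  have hfext : f_ext = M_p *ᵥ a + h_p + f_s := by
    rw [hpayload]; abel
  rw [hfext, hfstar, hatilde, mulVec_sub, add_mulVec, one_mulVec, ← hgain, mulVec_sub]
  abel

/-- The external force equals its outer-loop estimate plus the estimation error
`-M_p ã` (eqs. (16)-(17) of the paper). -/
theorem external_force_estimate_decomposition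
    {n : ℕ} (hn : 1 ≤ n)
    (M_p M_d : Matrix (Fin n) (Fin n) ℝ)
    (M_Δ : Matrix (Fin n) (Fin n) ℝ) (hMΔ : M_Δ = M_d - M_p)
    (hMΔunit : IsUnit M_Δ)
    (a astar h_p h_Δ f_s f_ext : Fin n → ℝ)
    (hpayload : M_p *ᵥ a + h_p = -f_s + f_ext)
    (houter : M_Δ *ᵥ astar + h_Δ = f_s)
    (atilde : Fin n → ℝ) (hatilde : atilde = astar - a)
    (fstar : Fin n → ℝ)
    (hfstar : fstar = (1 + M_p * M_Δ⁻¹) *ᵥ f_s + h_p - (M_p * M_Δ⁻¹) *ᵥ h_Δ) :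
    f_ext = fstar - M_p *ᵥ atilde :=
  external_force_estimate_decomposition_general M_p M_Δ hMΔunit a astar h_p h_Δ f_s f_ext hpayload
    houter atilde hatilde fstar hfstar
end

section
/- Let n ≥ 1, let G_p, G_d, Δ_m be real n×n matrices, let A be the 2n×2n block matrix [[0, 1], [-G_p, -G_d]], let G = [G_p G_d] (n×2n), and let D be the 2n×n block matrix with upper block 0 and lower block the identity. Let P be a real symmetric positive definite 2n×2n matrix satisfying the Lyapunov equation P A + Aᵀ P = -1. Let z : ℝ → ℝ^{2n} be differentiable and satisfy ż(t) = A z(t) - D Δ_m G z(t) for all t. Then the function V(t) = z(t)ᵀ P z(t) satisfies V'(t) ≤ (-1 + 2 ‖G‖ λ_max(P) ‖Δ_m‖) ‖z(t)‖² for all t, where ‖·‖ denotes the Euclidean norm on vectors and the induced operator norm on matrices and λ_max(P) is the largest eigenvalue of P. -/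
open Matrix
open scoped RealInnerProductSpace

/-! Along the flow, `V' = 2⟪P z, A z⟫ - 2⟪P z, D Δ_m G z⟫`. The Lyapunov equation turns the first
term into `-‖z‖²`. By Cauchy–Schwarz the second is at most `2 ‖P z‖ ‖D Δ_m G z‖`, and
`‖P z‖ ≤ λ_max(P) ‖z‖` because `P` acts diagonally in an orthonormal eigenbasis, while `D` is an
isometry, so `‖D Δ_m G z‖ ≤ ‖Δ_m‖ ‖G‖ ‖z‖`. -/

/-- The operator norm of a real matrix induced by the Euclidean norm. -/
noncomputable def opNorm {m n : Type*} [Fintype m] [Fintype n] [DecidableEq n]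
    (A : Matrix m n ℝ) : ℝ :=
  ‖LinearMap.toContinuousLinearMap (Matrix.toEuclideanLin A)‖

namespace LinearMap.IsSymmetric

variable {𝕜 E : Type*} [RCLike 𝕜] [NormedAddCommGroup E] [InnerProductSpace 𝕜 E]
  [FiniteDimensional 𝕜 E] {T : E →ₗ[𝕜] E} {n : ℕ}

theorem norm_apply_le_iSup_abs_eigenvalues_mul (hT : T.IsSymmetric)
    (hn : Module.finrank 𝕜 E = n) (v : E) :
    ‖T v‖ ≤ (⨆ i, |hT.eigenvalues hn i|) * ‖v‖ := by
  set b := hT.eigenvectorBasis hn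
  set c := ⨆ i, |hT.eigenvalues hn i|
  have hc : ∀ i, |hT.eigenvalues hn i| ≤ c := le_ciSup (Set.finite_range _).bddAbove
  have hc0 : 0 ≤ c := Real.iSup_nonneg fun i ↦ abs_nonneg _
  rw [← sq_le_sq₀ (norm_nonneg _) (by positivity), mul_pow, ← b.repr.norm_map,
    ← b.repr.norm_map v, EuclideanSpace.norm_sq_eq, EuclideanSpace.norm_sq_eq, Finset.mul_sum]
  gcongr with i
  rw [hT.eigenvectorBasis_apply_self_apply, norm_mul, mul_pow, RCLike.norm_ofReal]
  gcongr
  exact hc i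

end LinearMap.IsSymmetric

theorem HasDerivAt.inner_apply_self {E : Type*} [NormedAddCommGroup E] [InnerProductSpace ℝ E]
    [FiniteDimensional ℝ E] {T : E →ₗ[ℝ] E} (hT : T.IsSymmetric) {z : ℝ → E} {z' : E} {t : ℝ}
    (hz : HasDerivAt z z' t) :
    HasDerivAt (fun s ↦ ⟪z s, T (z s)⟫) (2 * ⟪T (z t), z'⟫) t := by
  have hTz : HasDerivAt (fun s ↦ T (z s)) (T z') t :=
    (LinearMap.toContinuousLinearMap T).hasFDerivAt.comp_hasDerivAt t hz
  refine (hz.inner ℝ hTz).congr_deriv ?_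
  rw [← hT, real_inner_comm (T (z t))]
  ring

namespace Matrix

section

open scoped ComplexOrder

variable {𝕜 ι : Type*} [RCLike 𝕜] [Fintype ι] [DecidableEq ι] {A : Matrix ι ι 𝕜}

theorem IsHermitian.norm_toEuclideanLin_le (hA : A.IsHermitian) (x : EuclideanSpace 𝕜 ι) :
    ‖toEuclideanLin A x‖ ≤ (⨆ i, |hA.eigenvalues i|) * ‖x‖ := by
  have h := (isSymmetric_toEuclideanLin_iff.mpr hA).norm_apply_le_iSup_abs_eigenvalues_mul
    finrank_euclideanSpace x
  rwa [← (Fintype.equivOfCardEq (Fintype.card_fin _)).symm.iSup_comp] at h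

theorem PosSemidef.norm_toEuclideanLin_le (hA : A.PosSemidef) (x : EuclideanSpace 𝕜 ι) :
    ‖toEuclideanLin A x‖ ≤ (⨆ i, hA.isHermitian.eigenvalues i) * ‖x‖ := by
  simpa only [abs_of_nonneg (hA.eigenvalues_nonneg _)] using
    hA.isHermitian.norm_toEuclideanLin_le x

end

section

variable {m n : Type*} [Fintype m] [Fintype n] [DecidableEq n]

theorem inner_toEuclideanLin_mul_add_transpose_mul {P A : Matrix n n ℝ} (hP : P.IsHermitian)
    (x : EuclideanSpace ℝ n) :
    ⟪x, toEuclideanLin (P * A + Aᵀ * P) x⟫ = 2 * ⟪toEuclideanLin P x, toEuclideanLin A x⟫ := by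
  have hAt : toEuclideanLin Aᵀ = (toEuclideanLin A).adjoint := by
    rw [← conjTranspose_eq_transpose_of_trivial, toEuclideanLin_conjTranspose_eq_adjoint]
  simp only [map_add, toLpLin_mul_same, LinearMap.add_apply, LinearMap.comp_apply, inner_add_right]
  rw [hAt, LinearMap.adjoint_inner_right, ← isSymmetric_toEuclideanLin_iff.mpr hP,
    real_inner_comm (toEuclideanLin A x)]
  ring

theorem norm_toEuclideanLin_le_opNorm (M : Matrix m n ℝ) (x : EuclideanSpace ℝ n) :
    ‖toEuclideanLin M x‖ ≤ opNorm M * ‖x‖ :=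
  (LinearMap.toContinuousLinearMap (toEuclideanLin M)).le_opNorm x

theorem opNorm_nonneg (M : Matrix m n ℝ) : 0 ≤ opNorm M := norm_nonneg _

theorem norm_toEuclideanLin_fromRows_zero_one {𝕜 : Type*} [RCLike 𝕜] (x : EuclideanSpace 𝕜 n) :
    ‖toEuclideanLin (fromRows (0 : Matrix m n 𝕜) (1 : Matrix n n 𝕜)) x‖ = ‖x‖ := by
  rw [← sq_eq_sq₀ (norm_nonneg _) (norm_nonneg _), EuclideanSpace.norm_sq_eq,
    EuclideanSpace.norm_sq_eq, Fintype.sum_sum_type]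
  simp [toLpLin_apply, fromRows_mulVec]

theorem norm_toEuclideanLin_fromRows_zero_one_mul_mul_le {k l : Type*} [Fintype k] [DecidableEq k]
    [Fintype l] [DecidableEq l] (M : Matrix n k ℝ) (N : Matrix k l ℝ) (x : EuclideanSpace ℝ l) :
    ‖toEuclideanLin (fromRows (0 : Matrix m n ℝ) (1 : Matrix n n ℝ) * M * N) x‖ ≤
      opNorm M * opNorm N * ‖x‖ := by
  rw [toLpLin_mul_same, toLpLin_mul_same, LinearMap.comp_apply, LinearMap.comp_apply,
    norm_toEuclideanLin_fromRows_zero_one, mul_assoc]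
  exact (norm_toEuclideanLin_le_opNorm M _).trans
    (by gcongr; exacts [opNorm_nonneg M, norm_toEuclideanLin_le_opNorm N x])

end

end Matrix

theorem lyapunov_derivative_bound_general
    {n : ℕ}
    (Δ_m : Matrix (Fin n) (Fin n) ℝ)
    (A : Matrix (Fin n ⊕ Fin n) (Fin n ⊕ Fin n) ℝ)
    (G : Matrix (Fin n) (Fin n ⊕ Fin n) ℝ)
    (D : Matrix (Fin n ⊕ Fin n) (Fin n) ℝ) (hD : D = Matrix.fromRows 0 1)
    (P : Matrix (Fin n ⊕ Fin n) (Fin n ⊕ Fin n) ℝ)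
    (hP : P.PosDef) (hLyap : P * A + Aᵀ * P = -1)
    (z : ℝ → EuclideanSpace ℝ (Fin n ⊕ Fin n))
    (hz : ∀ t, HasDerivAt z
      (Matrix.toEuclideanLin A (z t) - Matrix.toEuclideanLin (D * Δ_m * G) (z t)) t) :
    ∀ t, deriv (fun s => ⟪z s, Matrix.toEuclideanLin P (z s)⟫) t ≤
      (-1 + 2 * opNorm G * (⨆ i, hP.isHermitian.eigenvalues i) * opNorm Δ_m)
        * ‖z t‖ ^ 2 := by
  intro t
  set lam := ⨆ i, hP.isHermitian.eigenvalues i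
  set Pz := Matrix.toEuclideanLin P (z t)
  set Nz := Matrix.toEuclideanLin (D * Δ_m * G) (z t)
  rw [(HasDerivAt.inner_apply_self (isSymmetric_toEuclideanLin_iff.mpr hP.isHermitian)
    (hz t)).deriv]
  have hA : 2 * ⟪Pz, Matrix.toEuclideanLin A (z t)⟫ = -‖z t‖ ^ 2 := by
    rw [← inner_toEuclideanLin_mul_add_transpose_mul hP.isHermitian, hLyap, map_neg, toLpLin_one,
      LinearMap.neg_apply, LinearMap.id_apply, inner_neg_right, real_inner_self_eq_norm_sq]
  have hPz : ‖Pz‖ ≤ lam * ‖z t‖ := hP.posSemidef.norm_toEuclideanLin_le _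
  have hNz : ‖Nz‖ ≤ opNorm Δ_m * opNorm G * ‖z t‖ := by
    subst hD
    exact norm_toEuclideanLin_fromRows_zero_one_mul_mul_le _ _ _
  have hlam : 0 ≤ lam := Real.iSup_nonneg hP.posSemidef.eigenvalues_nonneg
  calc 2 * ⟪Pz, Matrix.toEuclideanLin A (z t) - Nz⟫
      = -‖z t‖ ^ 2 - 2 * ⟪Pz, Nz⟫ := by rw [inner_sub_right, mul_sub, hA]
    _ ≤ -‖z t‖ ^ 2 + 2 * (‖Pz‖ * ‖Nz‖) := by
        linarith [neg_le_of_abs_le (abs_real_inner_le_norm Pz Nz)]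
    _ ≤ -‖z t‖ ^ 2 + 2 * ((lam * ‖z t‖) * (opNorm Δ_m * opNorm G * ‖z t‖)) := by
        gcongr
    _ = _ := by ring

/-- The Lyapunov function `V = zᵀ P z` decreases along the perturbed closed-loop error
system at rate `(-1 + 2‖G‖ λ_max(P) ‖Δ_m‖) ‖z‖²` (Appendix B of the paper). -/
theorem lyapunov_derivative_bound
    {n : ℕ} (hn : 1 ≤ n)
    (G_p G_d Δ_m : Matrix (Fin n) (Fin n) ℝ)
    (A : Matrix (Fin n ⊕ Fin n) (Fin n ⊕ Fin n) ℝ)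
    (hA : A = Matrix.fromBlocks 0 1 (-G_p) (-G_d))
    (G : Matrix (Fin n) (Fin n ⊕ Fin n) ℝ) (hG : G = Matrix.fromCols G_p G_d)
    (D : Matrix (Fin n ⊕ Fin n) (Fin n) ℝ) (hD : D = Matrix.fromRows 0 1)
    (P : Matrix (Fin n ⊕ Fin n) (Fin n ⊕ Fin n) ℝ)
    (hP : P.PosDef) (hLyap : P * A + Aᵀ * P = -1)
    (z : ℝ → EuclideanSpace ℝ (Fin n ⊕ Fin n))
    (hz : ∀ t, HasDerivAt z
      (Matrix.toEuclideanLin A (z t) - Matrix.toEuclideanLin (D * Δ_m * G) (z t)) t) :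
    ∀ t, deriv (fun s => ⟪z s, Matrix.toEuclideanLin P (z s)⟫) t ≤
      (-1 + 2 * opNorm G * (⨆ i, hP.isHermitian.eigenvalues i) * opNorm Δ_m)
        * ‖z t‖ ^ 2 :=
  lyapunov_derivative_bound_general Δ_m A G D hD P hP hLyap z hz
end

section
/- Let m, n ≥ 1, let A be a real m×m matrix, D a real m×n matrix, and P a real symmetric positive definite m×m matrix satisfying P A + Aᵀ P = -1. Let η : ℝ → ℝⁿ, let ρ > 0, and let z : ℝ → ℝ^m be differentiable satisfying ż(t) = A z(t) + D(η(t) - w(t)) where w(t) = ρ · Dᵀ P z(t)/‖Dᵀ P z(t)‖ whenever Dᵀ P z(t) ≠ 0. Then at every time t with Dᵀ P z(t) ≠ 0, the function V(t) = z(t)ᵀ P z(t) satisfies V'(t) ≤ -‖z(t)‖² + 2 ‖Dᵀ P z(t)‖ (‖η(t)‖ - ρ). In particular, if ρ ≥ ‖η(t)‖ for all t, then V'(t) ≤ -‖z(t)‖² at all such times. -/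
open Matrix
open scoped RealInnerProductSpace

/-!
Along the closed loop, `V = ⟪z, P z⟫` has derivative `2 ⟪P z, A z + D (η - w)⟫`. The Lyapunov
equation turns `2 ⟪P z, A z⟫` into `-‖z‖²`, and moving `D` across the inner product turns the
rest into `2 ⟪q, η - w⟫` with `q = Dᵀ P z`. Since `w` points along `q` with length `ρ`,
Cauchy–Schwarz bounds `⟪q, η - w⟫` by `‖q‖ (‖η‖ - ρ)`.
-/

theorem LinearMap.IsSymmetric.hasDerivAt_inner_self_apply {E : Type*} [NormedAddCommGroup E]
    [InnerProductSpace ℝ E] {T : E →L[ℝ] E} (hT : (T : E →ₗ[ℝ] E).IsSymmetric)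
    {z : ℝ → E} {z' : E} {t : ℝ} (hz : HasDerivAt z z' t) :
    HasDerivAt (fun s => ⟪z s, T (z s)⟫) (2 * ⟪T (z t), z'⟫) t := by
  refine (hz.inner ℝ (T.hasFDerivAt.comp_hasDerivAt t hz)).congr_deriv ?_
  have hTz : ⟪z t, T z'⟫ = ⟪T (z t), z'⟫ := (hT (z t) z').symm
  rw [Function.comp_apply, hTz, real_inner_comm z']
  ring

theorem real_inner_sub_div_norm_smul_le {F : Type*} [NormedAddCommGroup F]
    [InnerProductSpace ℝ F] (q x : F) (ρ : ℝ) :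
    ⟪q, x - (ρ / ‖q‖) • q⟫ ≤ ‖q‖ * (‖x‖ - ρ) := by
  have hqq : ⟪q, (ρ / ‖q‖) • q⟫ = ρ * ‖q‖ := by
    rw [real_inner_smul_right, real_inner_self_eq_norm_sq]
    rcases eq_or_ne ‖q‖ 0 with hq | hq
    · simp [hq]
    · field_simp
  rw [inner_sub_right, hqq]
  nlinarith [real_inner_le_norm q x]

namespace Matrix

variable {l m n : Type*}

theorem toEuclideanLin_mul_apply [Fintype n] [DecidableEq n] [Fintype l] [DecidableEq l]
    (M : Matrix m n ℝ) (N : Matrix n l ℝ) (x : EuclideanSpace ℝ l) :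
    toEuclideanLin (M * N) x = toEuclideanLin M (toEuclideanLin N x) := by
  ext i
  simp [mulVec_mulVec]

theorem inner_toEuclideanLin_left [Fintype m] [DecidableEq m] [Fintype n] [DecidableEq n]
    (M : Matrix m n ℝ) (x : EuclideanSpace ℝ n) (y : EuclideanSpace ℝ m) :
    ⟪toEuclideanLin M x, y⟫ = ⟪x, toEuclideanLin Mᵀ y⟫ := by
  rw [← conjTranspose_eq_transpose_of_trivial, toEuclideanLin_conjTranspose_eq_adjoint,
    LinearMap.adjoint_inner_right]

theorem IsHermitian.two_mul_inner_toEuclideanLin_mul [Fintype m] [DecidableEq m]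
    {P : Matrix m m ℝ} (hP : P.IsHermitian) (A : Matrix m m ℝ) (x : EuclideanSpace ℝ m) :
    2 * ⟪toEuclideanLin P x, toEuclideanLin A x⟫ = ⟪x, toEuclideanLin (P * A + Aᵀ * P) x⟫ := by
  have hsymm := isSymmetric_toEuclideanLin_iff.mpr hP
  rw [map_add, LinearMap.add_apply, inner_add_right, toEuclideanLin_mul_apply,
    toEuclideanLin_mul_apply, ← inner_toEuclideanLin_left, ← hsymm,
    real_inner_comm (toEuclideanLin P x) (toEuclideanLin A x)]
  ring

theorem hasDerivAt_inner_toEuclideanLin_of_lyapunov [Fintype m] [DecidableEq m] [Fintype n]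
    [DecidableEq n] {A P : Matrix m m ℝ} (D : Matrix m n ℝ) (hP : P.IsHermitian)
    (hLyap : P * A + Aᵀ * P = -1)
    {z : ℝ → EuclideanSpace ℝ m} {u : EuclideanSpace ℝ n} {t : ℝ}
    (hz : HasDerivAt z (toEuclideanLin A (z t) + toEuclideanLin D u) t) :
    HasDerivAt (fun s => ⟪z s, toEuclideanLin P (z s)⟫)
      (-‖z t‖ ^ 2 + 2 * ⟪toEuclideanLin (Dᵀ * P) (z t), u⟫) t := by
  have hsymm := isSymmetric_toEuclideanLin_iff.mpr hP
  refine (hsymm.hasDerivAt_inner_self_apply (T := toEuclideanCLM (n := m) (𝕜 := ℝ) P)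
    hz).congr_deriv ?_
  have hA : ⟪z t, toEuclideanLin (P * A + Aᵀ * P) (z t)⟫ = -‖z t‖ ^ 2 := by
    have hneg : toEuclideanLin (-1 : Matrix m m ℝ) (z t) = -z t := by
      ext i
      simp
    rw [hLyap, hneg, inner_neg_right, real_inner_self_eq_norm_sq]
  change 2 * ⟪toEuclideanLin P (z t), _⟫ = _
  rw [inner_add_right, mul_add, hP.two_mul_inner_toEuclideanLin_mul, hA,
    toEuclideanLin_mul_apply, inner_toEuclideanLin_left Dᵀ, transpose_transpose]

end Matrix

theorem robust_control_lyapunov_decrease_general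
    {m n : ℕ}
    (A : Matrix (Fin m) (Fin m) ℝ) (D : Matrix (Fin m) (Fin n) ℝ)
    (P : Matrix (Fin m) (Fin m) ℝ) (hP : P.PosDef)
    (hLyap : P * A + Aᵀ * P = -1)
    (η : ℝ → EuclideanSpace ℝ (Fin n)) (ρ : ℝ)
    (z : ℝ → EuclideanSpace ℝ (Fin m))
    (w : ℝ → EuclideanSpace ℝ (Fin n))
    (hw : ∀ t, Matrix.toEuclideanLin (Dᵀ * P) (z t) ≠ 0 →
      w t = (ρ / ‖Matrix.toEuclideanLin (Dᵀ * P) (z t)‖) •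
        Matrix.toEuclideanLin (Dᵀ * P) (z t))
    (hz : ∀ t, HasDerivAt z
      (Matrix.toEuclideanLin A (z t) + Matrix.toEuclideanLin D (η t - w t)) t) :
    (∀ t, Matrix.toEuclideanLin (Dᵀ * P) (z t) ≠ 0 →
      deriv (fun s => ⟪z s, Matrix.toEuclideanLin P (z s)⟫) t ≤
        -‖z t‖ ^ 2 + 2 * ‖Matrix.toEuclideanLin (Dᵀ * P) (z t)‖ * (‖η t‖ - ρ)) ∧
    ((∀ t, ρ ≥ ‖η t‖) → ∀ t, Matrix.toEuclideanLin (Dᵀ * P) (z t) ≠ 0 →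
      deriv (fun s => ⟪z s, Matrix.toEuclideanLin P (z s)⟫) t ≤ -‖z t‖ ^ 2) := by
  have hdecrease : ∀ t, Matrix.toEuclideanLin (Dᵀ * P) (z t) ≠ 0 →
      deriv (fun s => ⟪z s, Matrix.toEuclideanLin P (z s)⟫) t ≤
        -‖z t‖ ^ 2 + 2 * ‖Matrix.toEuclideanLin (Dᵀ * P) (z t)‖ * (‖η t‖ - ρ) := by
    intro t hq
    rw [(Matrix.hasDerivAt_inner_toEuclideanLin_of_lyapunov D hP.isHermitian hLyap
      (hz t)).deriv, hw t hq]
    linarith [real_inner_sub_div_norm_smul_le (Matrix.toEuclideanLin (Dᵀ * P) (z t)) (η t) ρ]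
  refine ⟨hdecrease, fun hρη t hq => (hdecrease t hq).trans ?_⟩
  have hcross : ‖Matrix.toEuclideanLin (Dᵀ * P) (z t)‖ * (‖η t‖ - ρ) ≤ 0 :=
    mul_nonpos_of_nonneg_of_nonpos (norm_nonneg _) (by linarith [hρη t])
  linarith

/-- Lyapunov decrease property of the discontinuous robust (unit-vector) control input:
whenever `Dᵀ P z ≠ 0`, the derivative of `V = zᵀ P z` satisfies
`V' ≤ -‖z‖² + 2‖Dᵀ P z‖(‖η‖ - ρ)`; in particular, if `ρ ≥ ‖η‖` then `V' ≤ -‖z‖²`. -/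
theorem robust_control_lyapunov_decrease
    {m n : ℕ} (hm : 1 ≤ m) (hn : 1 ≤ n)
    (A : Matrix (Fin m) (Fin m) ℝ) (D : Matrix (Fin m) (Fin n) ℝ)
    (P : Matrix (Fin m) (Fin m) ℝ) (hP : P.PosDef)
    (hLyap : P * A + Aᵀ * P = -1)
    (η : ℝ → EuclideanSpace ℝ (Fin n)) (ρ : ℝ) (hρ : 0 < ρ)
    (z : ℝ → EuclideanSpace ℝ (Fin m))
    (w : ℝ → EuclideanSpace ℝ (Fin n))
    (hw : ∀ t, Matrix.toEuclideanLin (Dᵀ * P) (z t) ≠ 0 →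
      w t = (ρ / ‖Matrix.toEuclideanLin (Dᵀ * P) (z t)‖) •
        Matrix.toEuclideanLin (Dᵀ * P) (z t))
    (hz : ∀ t, HasDerivAt z
      (Matrix.toEuclideanLin A (z t) + Matrix.toEuclideanLin D (η t - w t)) t) :
    (∀ t, Matrix.toEuclideanLin (Dᵀ * P) (z t) ≠ 0 →
      deriv (fun s => ⟪z s, Matrix.toEuclideanLin P (z s)⟫) t ≤
        -‖z t‖ ^ 2 + 2 * ‖Matrix.toEuclideanLin (Dᵀ * P) (z t)‖ * (‖η t‖ - ρ)) ∧
    ((∀ t, ρ ≥ ‖η t‖) → ∀ t, Matrix.toEuclideanLin (Dᵀ * P) (z t) ≠ 0 →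
      deriv (fun s => ⟪z s, Matrix.toEuclideanLin P (z s)⟫) t ≤ -‖z t‖ ^ 2) :=
  robust_control_lyapunov_decrease_general A D P hP hLyap η ρ z w hw hz
end

section
/- Let n ≥ 1 and let G_p and G_d be real symmetric positive definite n×n matrices. Let A be the 2n×2n block matrix [[0, 1], [-G_p, -G_d]]. Then A is Hurwitz: every complex eigenvalue λ of A (i.e., every root of the characteristic polynomial of A over ℂ) satisfies Re(λ) < 0. -/
open Matrix Polynomial
open scoped MatrixOrder ComplexOrder

/-! An eigenvector of `A` has the form `(x, λ x)` with `(λ² + λ G_d + G_p) x = 0`. Pairing with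
`x̄` gives `a λ² + b λ + c = 0` where `a = x̄ᵀx`, `b = x̄ᵀ G_d x`, `c = x̄ᵀ G_p x` are positive
reals, and such a quadratic has no root in the closed right half-plane: a non-real root has
`Re λ = -b / 2a`, a real one is negative since all coefficients are positive. -/

theorem Matrix.exists_mulVec_eq_smul_of_mem_roots_charpoly {n K : Type*} [Fintype n]
    [DecidableEq n] [Field K] {M : Matrix n n K} {μ : K} (h : μ ∈ M.charpoly.roots) :
    ∃ v ≠ 0, M *ᵥ v = μ • v := by
  have hμ := mem_spectrum_iff_isRoot_charpoly.mpr (isRoot_of_mem_roots h)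
  rw [← spectrum_toLin', ← Module.End.hasEigenvalue_iff_mem_spectrum] at hμ
  obtain ⟨v, hv⟩ := hμ.exists_hasEigenvector
  exact ⟨v, hv.2, by simpa using hv.apply_eq_smul⟩

theorem Matrix.PosDef.map_ofReal {n : Type*} [Fintype n] [DecidableEq n] {G : Matrix n n ℝ}
    (hG : G.PosDef) : (G.map (algebraMap ℝ ℂ)).PosDef := by
  obtain ⟨B, rfl⟩ := CStarAlgebra.nonneg_iff_eq_star_mul_self.mp hG.posSemidef.nonneg
  have hsemi : ((star B * B).map (algebraMap ℝ ℂ)).PosSemidef := by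
    rw [Matrix.map_mul, star_eq_conjTranspose, conjTranspose_map _ algebraMap_star_comm]
    exact posSemidef_conjTranspose_mul_self _
  rw [hsemi.posDef_iff_det_ne_zero, ← RingHom.mapMatrix_apply, ← RingHom.map_det]
  exact (_root_.map_ne_zero _).mpr hG.det_pos.ne'

theorem Complex.re_neg_of_quadratic_eq_zero {a b c z : ℂ} (ha : 0 < a) (hb : 0 < b) (hc : 0 < c)
    (h : a * z ^ 2 + b * z + c = 0) : z.re < 0 := by
  obtain ⟨ha, ha'⟩ := Complex.pos_iff.mp ha
  obtain ⟨hb, hb'⟩ := Complex.pos_iff.mp hb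
  obtain ⟨hc, hc'⟩ := Complex.pos_iff.mp hc
  have hre := congrArg Complex.re h
  have him := congrArg Complex.im h
  simp only [pow_two, add_re, add_im, mul_re, mul_im, ← ha', ← hb', ← hc', zero_re, zero_im]
    at hre him
  by_contra! hz
  have hq : z.im = 0 := by
    have : z.im * (2 * a.re * z.re + b.re) = 0 := by linear_combination him
    exact (mul_eq_zero.mp this).resolve_right (by positivity)
  rw [hq] at hre
  nlinarith [mul_nonneg (mul_nonneg ha.le hz) hz, mul_nonneg hb.le hz]

theorem Matrix.fromBlocks_zero_one_mulVec_eq_smul {m R : Type*} [Fintype m] [DecidableEq m]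
    [CommRing R] {P D : Matrix m m R} {μ : R} {x y : m → R}
    (h : fromBlocks 0 1 (-P) (-D) *ᵥ Sum.elim x y = μ • Sum.elim x y) :
    y = μ • x ∧ P *ᵥ x + μ • D *ᵥ x + μ ^ 2 • x = 0 := by
  have hx := congrArg (· ∘ Sum.inl) h
  have hy := congrArg (· ∘ Sum.inr) h
  simp only [fromBlocks_mulVec, Sum.elim_comp_inl, Sum.elim_comp_inr, Pi.smul_comp, zero_mulVec,
    one_mulVec, zero_add, neg_mulVec] at hx hy
  subst hx
  refine ⟨rfl, ?_⟩
  rw [mulVec_smul] at hy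
  rw [pow_two, mul_smul, ← hy]
  abel

theorem closed_loop_matrix_hurwitz_general
    {n : ℕ}
    (G_p G_d : Matrix (Fin n) (Fin n) ℝ)
    (hGp : G_p.PosDef) (hGd : G_d.PosDef)
    (A : Matrix (Fin n ⊕ Fin n) (Fin n ⊕ Fin n) ℝ)
    (hA : A = Matrix.fromBlocks 0 1 (-G_p) (-G_d)) :
    ∀ lam ∈ ((A.map (algebraMap ℝ ℂ)).charpoly).roots, lam.re < 0 := by
  intro lam hlam
  obtain ⟨v, hv0, hv⟩ := exists_mulVec_eq_smul_of_mem_roots_charpoly hlam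
  have hAC : A.map (algebraMap ℝ ℂ) =
      fromBlocks 0 1 (-G_p.map (algebraMap ℝ ℂ)) (-G_d.map (algebraMap ℝ ℂ)) := by
    simp [hA, fromBlocks_map, Matrix.map_neg]
  obtain ⟨x, y, rfl⟩ : ∃ x y, v = Sum.elim x y := ⟨_, _, (Sum.elim_comp_inl_inr v).symm⟩
  rw [hAC] at hv
  obtain ⟨rfl, hx⟩ := fromBlocks_zero_one_mulVec_eq_smul hv
  have hx0 : x ≠ 0 := by
    rintro rfl
    simp at hv0
  refine Complex.re_neg_of_quadratic_eq_zero (PosDef.one.dotProduct_mulVec_pos hx0)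
    (hGd.map_ofReal.dotProduct_mulVec_pos hx0) (hGp.map_ofReal.dotProduct_mulVec_pos hx0) ?_
  have hquad := congrArg (star x ⬝ᵥ ·) hx
  simp only [dotProduct_add, dotProduct_smul, one_mulVec, smul_eq_mul, dotProduct_zero] at hquad ⊢
  linear_combination hquad

/-- The closed-loop matrix `A = [[0, 1], [-G_p, -G_d]]` with symmetric positive
definite gains `G_p`, `G_d` is Hurwitz: every complex eigenvalue has negative real
part. -/
theorem closed_loop_matrix_hurwitz
    {n : ℕ} (hn : 1 ≤ n)
    (G_p G_d : Matrix (Fin n) (Fin n) ℝ)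
    (hGp : G_p.PosDef) (hGd : G_d.PosDef)
    (A : Matrix (Fin n ⊕ Fin n) (Fin n ⊕ Fin n) ℝ)
    (hA : A = Matrix.fromBlocks 0 1 (-G_p) (-G_d)) :
    ∀ lam ∈ ((A.map (algebraMap ℝ ℂ)).charpoly).roots, lam.re < 0 :=
  closed_loop_matrix_hurwitz_general G_p G_d hGp hGd A hA
end
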